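/- Let x ∈ F_q^{n×m}, X = [I_n | x] ∈ F_q^{n×(n+m)}, and let Y = [Â | y] ∈ F_q^{N×(n+m)} with Â ∈ F_q^{N×n}, y ∈ F_q^{N×m}, and rank Y = N. Set μ = n − rank Â and δ = N − rank Â. Then d_S(⟨X⟩, ⟨Y⟩) = 2·rank(y − Âx) + μ − δ. -/

import Mathlib

/-- The row space of a matrix: the span of its rows. -/
noncomputable def rowSpace {F : Type*} [Field F] {ι κ : Type*}
    (M : Matrix ι κ F) : Submodule F (κ → F) :=
  Submodule.span F (Set.range fun i => M i)

/-- The subspace distance `d_S(U,V) = dim(U + V) - dim(U ∩ V)`. -/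
noncomputable def sDist {F : Type*} [Field F] {κ : Type*}
    (U V : Submodule F (κ → F)) : ℕ :=
  Module.finrank F ↥(U ⊔ V) - Module.finrank F ↥(U ⊓ V)

/-!
Write `U = ⟨[I | x]⟩` and `V = ⟨Y⟩`, of dimensions `n` and `N`. Every vector of `U` has the
form `[a | a x]`. Since the rows of `Y` are independent, `c ↦ c Y` identifies `F^N` with `V`,
and `c Y = [c Â | c y]` lies in `U` iff `c y = c Â x`, i.e. iff `c (y - Â x) = 0`. Hence
`dim (U ∩ V) = N - rank (y - Â x)`, and
`d_S(U, V) = dim U + dim V - 2 dim (U ∩ V) = 2 rank (y - Â x) + n - N`, while `μ - δ = n - N`.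
-/

open Matrix Module Submodule

section RowSpace

variable {F : Type*} [Field F] {ι κ ρ : Type*} [Fintype ι] [Fintype ρ]

theorem rowSpace_eq_range_vecMulLinear (M : Matrix ι κ F) :
    rowSpace M = LinearMap.range M.vecMulLinear :=
  (range_vecMulLinear M).symm

theorem finrank_rowSpace [Fintype κ] (M : Matrix ι κ F) : finrank F (rowSpace M) = M.rank :=
  M.rank_eq_finrank_span_row.symm

theorem finrank_ker_vecMulLinear_add_rank [Fintype κ] (M : Matrix ι κ F) :
    finrank F (LinearMap.ker M.vecMulLinear) + M.rank = Fintype.card ι := by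
  rw [← finrank_rowSpace, rowSpace_eq_range_vecMulLinear, add_comm,
    LinearMap.finrank_range_add_finrank_ker, finrank_fintype_fun_eq_card]

theorem vecMulLinear_injective_of_rank_eq_card [Fintype κ] {M : Matrix ι κ F}
    (hM : M.rank = Fintype.card ι) : Function.Injective M.vecMulLinear := by
  have hker := finrank_ker_vecMulLinear_add_rank M
  rw [← LinearMap.ker_eq_bot, ← Submodule.finrank_eq_zero]
  omega

theorem rank_fromCols_one [DecidableEq ι] [Fintype κ] (x : Matrix ι κ F) :
    (fromCols (1 : Matrix ι ι F) x).rank = Fintype.card ι := by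
  refine LinearIndependent.rank_matrix (vecMul_injective_iff.mp fun c d hcd => ?_)
  simpa [vecMul_fromCols] using congrArg (fun v => v ∘ Sum.inl) hcd

theorem vecMul_fromCols_mem_rowSpace_fromCols_one_iff [DecidableEq ι]
    (x : Matrix ι κ F) (A : Matrix ρ ι F) (y : Matrix ρ κ F) (c : ρ → F) :
    c ᵥ* fromCols A y ∈ rowSpace (fromCols (1 : Matrix ι ι F) x) ↔ c ᵥ* (y - A * x) = 0 := by
  rw [rowSpace_eq_range_vecMulLinear, LinearMap.mem_range, vecMul_sub, sub_eq_zero,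
    ← vecMul_vecMul]
  simp only [vecMulLinear_apply, vecMul_fromCols, vecMul_one, Sum.elim_eq_iff,
    exists_eq_left, eq_comm]

theorem finrank_inf_rowSpace_fromCols_add_rank [DecidableEq ι] [Fintype κ]
    (x : Matrix ι κ F) (A : Matrix ρ ι F) (y : Matrix ρ κ F)
    (hrank : (fromCols A y).rank = Fintype.card ρ) :
    finrank F ↥(rowSpace (fromCols (1 : Matrix ι ι F) x) ⊓ rowSpace (fromCols A y))
      + (y - A * x).rank = Fintype.card ρ := by
  set φ := (fromCols A y).vecMulLinear
  have hcomap : (rowSpace (fromCols (1 : Matrix ι ι F) x)).comap φ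
      = LinearMap.ker (y - A * x).vecMulLinear := by
    ext c
    exact vecMul_fromCols_mem_rowSpace_fromCols_one_iff x A y c
  have hinf : rowSpace (fromCols (1 : Matrix ι ι F) x) ⊓ rowSpace (fromCols A y)
      = ((rowSpace (fromCols (1 : Matrix ι ι F) x)).comap φ).map φ := by
    rw [map_comap_eq, rowSpace_eq_range_vecMulLinear (fromCols A y), inf_comm]
  rw [hinf, ← (equivMapOfInjective φ (vecMulLinear_injective_of_rank_eq_card hrank) _).finrank_eq,
    hcomap, finrank_ker_vecMulLinear_add_rank]

end RowSpace

theorem sDist_eq_finrank_add_finrank_sub {F : Type*} [Field F] {κ : Type*} [Finite κ]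
    (U V : Submodule F (κ → F)) :
    (sDist U V : ℤ) = finrank F U + finrank F V - 2 * finrank F ↥(U ⊓ V) := by
  have hle : finrank F ↥(U ⊓ V) ≤ finrank F ↥(U ⊔ V) :=
    Submodule.finrank_mono (inf_le_left.trans le_sup_left)
  have hsum := Submodule.finrank_sup_add_finrank_inf_eq U V
  rw [sDist, Nat.cast_sub hle]
  omega

theorem sDist_lifting_general_general
    {F : Type*} [Field F] {n m N : ℕ} {μ δ : ℕ}
    (x : Matrix (Fin n) (Fin m) F)
    (Ahat : Matrix (Fin N) (Fin n) F) (y : Matrix (Fin N) (Fin m) F)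
    (Y : Matrix (Fin N) (Fin n ⊕ Fin m) F)
    (hY : Y = Matrix.fromCols Ahat y) (hrank : Y.rank = N)
    (hμ : μ = n - Ahat.rank) (hδ : δ = N - Ahat.rank) :
    (sDist (rowSpace (Matrix.fromCols (1 : Matrix (Fin n) (Fin n) F) x))
        (rowSpace Y) : ℤ)
      = 2 * ((y - Ahat * x).rank : ℤ) + (μ : ℤ) - (δ : ℤ) := by
  subst hY hμ hδ
  have hdimInf := finrank_inf_rowSpace_fromCols_add_rank x Ahat y (by simpa using hrank)
  rw [Fintype.card_fin] at hdimInf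
  rw [sDist_eq_finrank_add_finrank_sub, finrank_rowSpace, finrank_rowSpace, rank_fromCols_one,
    Fintype.card_fin, hrank]
  have hAn := rank_le_width Ahat
  have hAN := rank_le_height Ahat
  omega

/-- for `X = [I | x]` and `Y = [Ahat | y] ∈ F_q^{N×(n+m)}` with
`rank Y = N`, `μ = n − rank Ahat` and `δ = N − rank Ahat`, one has
`d_S(⟨X⟩, ⟨Y⟩) = 2·rank(y − Ahat·x) + μ − δ`. -/
theorem sDist_lifting_general
    {F : Type*} [Field F] [Fintype F] [DecidableEq F] {n m N : ℕ} {μ δ : ℕ}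
    (x : Matrix (Fin n) (Fin m) F)
    (Ahat : Matrix (Fin N) (Fin n) F) (y : Matrix (Fin N) (Fin m) F)
    (Y : Matrix (Fin N) (Fin n ⊕ Fin m) F)
    (hY : Y = Matrix.fromCols Ahat y) (hrank : Y.rank = N)
    (hμ : μ = n - Ahat.rank) (hδ : δ = N - Ahat.rank) :
    (sDist (rowSpace (Matrix.fromCols (1 : Matrix (Fin n) (Fin n) F) x))
        (rowSpace Y) : ℤ)
      = 2 * ((y - Ahat * x).rank : ℤ) + (μ : ℤ) - (δ : ℤ) :=
  sDist_lifting_general_general x Ahat y Y hY hrank hμ hδ
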